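/- arXiv:2110.03548 — 2 statements merged into one kernel-verified Lean document; each statement's English description precedes it below -/
import Mathlib

section
/- Let A be a unital C*-algebra which is a continuous field of C*-algebras over a compact Hausdorff space X with surjective fibre projections q_x : A → A_x. Then an element a ∈ A is invertible if and only if q_x(a) is invertible in A_x for every x ∈ X. -/
open scoped NNReal

/-- In a unital C⋆-algebra, if `c` is invertible, then `‖t•1 - c*c‖ < t` for any
`t ≥ ‖c*c‖` with `t > 0`. -/
lemma aux_norm_lt {C : Type*} [CStarAlgebra C] (c : C) (hu : IsUnit c) {t : ℝ}
    (ht : 0 < t) (htc : ‖star c * c‖ ≤ t) :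
    ‖algebraMap ℝ C t - star c * c‖ < t := by
  obtain hC | hC := subsingleton_or_nontrivial C
  · simpa [Subsingleton.elim (algebraMap ℝ C t - star c * c) (0 : C)] using ht
  letI := CStarAlgebra.spectralOrder C
  haveI := CStarAlgebra.spectralOrderedRing C
  set p := star c * c with hpdef
  have hp : 0 ≤ p := star_mul_self_nonneg c
  have hpsa : IsSelfAdjoint p := IsSelfAdjoint.star_mul_self c
  have hup : IsUnit p := hu.star.mul hu
  have h0 : (0 : ℝ) ∉ spectrum ℝ p := spectrum.zero_notMem ℝ hup
  have hpos : ∀ x ∈ spectrum ℝ p, 0 < x := fun x hx =>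
    lt_of_le_of_ne (spectrum_nonneg_of_nonneg hp hx) (fun h => h0 (h ▸ hx))
  obtain ⟨r, hr, hrp⟩ := (CFC.exists_pos_algebraMap_le_iff (a := p) hpsa).mpr hpos
  have mono : ∀ {u v : ℝ}, u ≤ v → algebraMap ℝ C u ≤ algebraMap ℝ C v := by
    intro u v huv
    rw [← sub_nonneg, ← map_sub]
    have hsq : algebraMap ℝ C (v - u) =
        star (algebraMap ℝ C (Real.sqrt (v - u))) * algebraMap ℝ C (Real.sqrt (v - u)) := by
      rw [(IsSelfAdjoint.all _).algebraMap (A := C), ← map_mul,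
        Real.mul_self_sqrt (by linarith)]
    rw [hsq]
    exact star_mul_self_nonneg _
  set r' := min r t with hr'def
  have hr' : 0 < r' := lt_min hr ht
  have hrp' : algebraMap ℝ C r' ≤ p := le_trans (mono (min_le_left r t)) hrp
  have h1 : algebraMap ℝ C t - p ≤ algebraMap ℝ C (t - r') := by
    rw [map_sub]
    exact sub_le_sub_left hrp' _
  have h2 : (0 : C) ≤ algebraMap ℝ C t - p := by
    rw [sub_nonneg]
    exact le_trans hpsa.le_algebraMap_norm_self (mono htc)
  have h3 := (CStarAlgebra.norm_le_iff_le_algebraMap (algebraMap ℝ C t - p)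
      (by linarith [min_le_right r t] : (0:ℝ) ≤ t - r') h2).mpr h1
  have : r' ≤ t := min_le_right r t
  linarith

/-- Neumann-series step: if `‖t•1 - p‖ < t` then `p` is invertible. -/
lemma aux_isUnit {C : Type*} [CStarAlgebra C] (p : C) {t : ℝ} (ht : 0 < t)
    (h : ‖algebraMap ℝ C t - p‖ < t) : IsUnit p := by
  have key : (1 : C) - t⁻¹ • p = t⁻¹ • (algebraMap ℝ C t - p) := by
    rw [smul_sub, Algebra.algebraMap_eq_smul_one, smul_smul, inv_mul_cancel₀ ht.ne', one_smul]
  have hnorm : ‖(1 : C) - t⁻¹ • p‖ < 1 := by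
    rw [key, norm_smul, Real.norm_eq_abs, abs_of_pos (inv_pos.mpr ht)]
    calc t⁻¹ * ‖algebraMap ℝ C t - p‖ < t⁻¹ * t := by
          exact (mul_lt_mul_iff_right₀ (inv_pos.mpr ht)).mpr h
      _ = 1 := inv_mul_cancel₀ ht.ne'
  have hu2 : IsUnit (t⁻¹ • p) := by
    have := (Units.oneSub ((1 : C) - t⁻¹ • p) hnorm).isUnit
    simpa using this
  have : p = t • (t⁻¹ • p) := by rw [smul_smul, mul_inv_cancel₀ ht.ne', one_smul]
  rw [this, Algebra.smul_def]
  exact ((ht.ne'.isUnit).map (algebraMap ℝ C)).mul hu2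

/-- **Invertibility in a continuous field of C*-algebras is fibrewise.**
Let `A` be a unital C*-algebra which is a continuous field of C*-algebras over a compact
Hausdorff space `X`, with unital surjective fibre projections `q x : A → B x` (so that
`x ↦ ‖q x a‖` is continuous and `‖a‖ = ⨆ x, ‖q x a‖`).  Then `a : A` is invertible if and
only if `q x a` is invertible in every fibre. -/
theorem stmt_0 {X : Type*} [TopologicalSpace X] [CompactSpace X] [T2Space X]
    {A : Type*} [CStarAlgebra A]
    (B : X → Type*) [∀ x, CStarAlgebra (B x)]
    (q : ∀ x, A →⋆ₐ[ℂ] B x)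
    (hsurj : ∀ x, Function.Surjective (q x))
    (hcont : ∀ a : A, Continuous fun x => ‖q x a‖)
    (hnorm : ∀ a : A, ‖a‖ = ⨆ x, ‖q x a‖)
    (a : A) :
    IsUnit a ↔ ∀ x, IsUnit (q x a) := by
  constructor
  · exact fun ha x => ha.map (q x)
  intro h
  obtain hA | hA := subsingleton_or_nontrivial A
  · exact isUnit_of_subsingleton a
  -- basic facts about the field
  have hbdd : ∀ c : A, BddAbove (Set.range fun x => ‖q x c‖) := fun c =>
    (isCompact_range (hcont c)).bddAbove
  have hle : ∀ (c : A) (x : X), ‖q x c‖ ≤ ‖c‖ := fun c x => by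
    rw [hnorm c]; exact le_ciSup (hbdd c) x
  -- X is nonempty
  have hXne : Nonempty X := by
    by_contra hX
    rw [not_nonempty_iff] at hX
    have h1 : ‖(1 : A)‖ = 0 := by
      rw [hnorm 1, Real.iSup_of_isEmpty]
    exact one_ne_zero (norm_eq_zero.mp h1)
  -- a ≠ 0
  have ha0 : a ≠ 0 := by
    rintro rfl
    have hsub : ∀ x, Subsingleton (B x) := fun x => by
      have := h x
      rw [map_zero] at this
      exact subsingleton_of_zero_eq_one (isUnit_zero_iff.mp this)
    have h1 : ‖(1 : A)‖ = 0 := by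
      rw [hnorm 1]
      have : ∀ x, ‖q x (1 : A)‖ = 0 := fun x => by
        haveI := hsub x
        simp [Subsingleton.elim (q x (1 : A)) 0]
      rw [funext fun x => this x]
      exact ciSup_const
    exact one_ne_zero (norm_eq_zero.mp h1)
  -- the key step: for any element whose fibres are all invertible, `star ∘ self` is a unit
  have key : ∀ b : A, b ≠ 0 → (∀ x, IsUnit (q x b)) → IsUnit (star b * b) := by
    intro b hb0 hb
    set t : ℝ := ‖star b * b‖ with htdef
    have ht : 0 < t := by
      rw [htdef]
      simpa [CStarRing.norm_star_mul_self] using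
        mul_pos (norm_pos_iff.mpr hb0) (norm_pos_iff.mpr hb0)
    set c : A := algebraMap ℝ A t - star b * b with hcdef
    have hqc : ∀ x, q x c = algebraMap ℝ (B x) t - star (q x b) * q x b := by
      intro x
      rw [hcdef, map_sub, map_mul, map_star]
      congr 1
      rw [IsScalarTower.algebraMap_apply ℝ ℂ A, IsScalarTower.algebraMap_apply ℝ ℂ (B x),
        AlgHomClass.commutes]
    have hlt : ∀ x, ‖q x c‖ < t := by
      intro x
      rw [hqc x]
      exact aux_norm_lt (q x b) (hb x) ht <| by
        calc ‖star (q x b) * q x b‖ = ‖q x (star b * b)‖ := by rw [map_mul, map_star]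
          _ ≤ ‖star b * b‖ := hle _ x
          _ = t := rfl
    -- compactness: the sup is attained
    obtain ⟨x₀, -, hx₀⟩ := isCompact_univ.exists_isMaxOn (Set.univ_nonempty)
      ((hcont c).continuousOn)
    have hc : ‖c‖ < t := by
      calc ‖c‖ = ⨆ x, ‖q x c‖ := hnorm c
        _ ≤ ‖q x₀ c‖ := ciSup_le fun x => hx₀ (Set.mem_univ x)
        _ < t := hlt x₀
    exact aux_isUnit (star b * b) ht (by rwa [← hcdef])
  -- now conclude
  have h1 : IsUnit (star a * a) := key a ha0 h
  have h2 : IsUnit (a * star a) := by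
    simpa [star_star] using key (star a) (star_ne_zero.mpr ha0) (fun x => by
      rw [map_star]; exact (h x).star)
  obtain ⟨u, hu⟩ := h1
  obtain ⟨v, hv⟩ := h2
  refine isUnit_iff_exists.mpr ⟨star a * ↑v⁻¹, ?_, ?_⟩
  · have : a * (star a * ↑v⁻¹) = (a * star a) * ↑v⁻¹ := (mul_assoc a (star a) (↑v⁻¹)).symm
    rw [this, ← hv, Units.mul_inv]
  · have hleft : (↑u⁻¹ * star a) * a = 1 := by
      rw [mul_assoc, ← hu, Units.inv_mul]
    have hright : a * (star a * ↑v⁻¹) = 1 := by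
      rw [← mul_assoc, ← hv, Units.mul_inv]
    have := left_inv_eq_right_inv hleft hright
    rw [← this, mul_assoc, ← hu, Units.inv_mul]
end

section
/- Let f : ℝ^n → ℂ be a Schwartz function with ∫_{ℝ^n} f(v) dv = 0, and let σ_λ(f)(v) = λ^{d} f(λ·v) where λ·v = (λ^{q_1}v_1,...,λ^{q_n}v_n) and d = Σ_j q_j. Then for every Schwartz function g and every λ ≥ 1, the L¹-norm of the (abelian) convolution σ_λ(f) * g satisfies ‖σ_λ(f) * g‖_{L¹} ≤ C λ^{-1} for some constant C depending on f and g; consequently ∫_1^∞ ‖σ_λ(f)*g‖_{L¹} dλ/λ < ∞. -/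
open MeasureTheory
open scoped BigOperators SchwartzMap

/-!
Since `∫ σ_λ f = 0`, the convolution can be rewritten as
`(σ_λ f ⋆ g)(x) = ∫ σ_λ f (y) (g (x - y) - g x) dy`. By the mean value theorem a Schwartz
function satisfies `‖g (⬝ - y) - g‖_{L¹} ≤ L ‖y‖`, so after Fubini
`‖σ_λ f ⋆ g‖_{L¹} ≤ L ∫ ‖y‖ |σ_λ f (y)| dy`. Substituting `z = λ · y` turns this moment into
`∫ ‖λ⁻¹ · z‖ |f z| dz`, and for `λ ≥ 1` and all weights `q_j ≥ 1` we have
`‖λ⁻¹ · z‖ ≤ λ⁻¹ ‖z‖`. The bound `C / λ` makes `‖σ_λ f ⋆ g‖_{L¹} / λ` integrable on `[1, ∞)`.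
-/

/-- The anisotropic dilation `λ · (v_1, …, v_n) = (λ^{q_1} v_1, …, λ^{q_n} v_n)`. -/
def dilate {n : ℕ} (Q : Fin n → ℕ) (l : ℝ) (v : Fin n → ℝ) : Fin n → ℝ :=
  fun j => l ^ (Q j) * v j

section Translation

variable {E F : Type*} [NormedAddCommGroup E] [NormedSpace ℝ E]
  [NormedAddCommGroup F] [NormedSpace ℝ F]

lemma norm_sub_comp_sub_le_of_fderiv_decay {g : E → F} (hg : Differentiable ℝ g) {k : ℕ} {D : ℝ}
    (hD : ∀ z, (1 + ‖z‖) ^ k * ‖fderiv ℝ g z‖ ≤ D) (x : E) {y : E} (hy : ‖y‖ ≤ 1) :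
    ‖g (x - y) - g x‖ ≤ 2 ^ k * D / (1 + ‖x‖) ^ k * ‖y‖ := by
  have hderiv : ∀ z ∈ Metric.closedBall x 1, ‖fderiv ℝ g z‖ ≤ 2 ^ k * D / (1 + ‖x‖) ^ k := by
    intro z hz
    have hxz : 1 + ‖x‖ ≤ 2 * (1 + ‖z‖) := by
      have := norm_le_norm_add_norm_sub' x z
      rw [Metric.mem_closedBall, dist_eq_norm, ← norm_neg, neg_sub] at hz
      linarith [norm_nonneg z]
    have hD' : ‖fderiv ℝ g z‖ * (1 + ‖z‖) ^ k ≤ D := by rw [mul_comm]; exact hD z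
    rw [le_div_iff₀ (by positivity)]
    calc ‖fderiv ℝ g z‖ * (1 + ‖x‖) ^ k ≤ ‖fderiv ℝ g z‖ * (2 * (1 + ‖z‖)) ^ k := by gcongr
      _ = 2 ^ k * (‖fderiv ℝ g z‖ * (1 + ‖z‖) ^ k) := by rw [mul_pow]; ring
      _ ≤ 2 ^ k * D := by gcongr
  have hmem : x - y ∈ Metric.closedBall x 1 := by simpa [dist_eq_norm] using hy
  simpa using (convex_closedBall x 1).norm_image_sub_le_of_norm_fderiv_le
    (fun z _ => hg z) hderiv (Metric.mem_closedBall_self zero_le_one) hmem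

variable [FiniteDimensional ℝ E] [MeasurableSpace E] [BorelSpace E]
  {μ : Measure E} [μ.IsAddHaarMeasure]

lemma exists_integral_norm_sub_comp_sub_le {g : E → F} (hg : Differentiable ℝ g)
    (hgi : Integrable g μ) {D : ℝ}
    (hD : ∀ z, (1 + ‖z‖) ^ (Module.finrank ℝ E + 1) * ‖fderiv ℝ g z‖ ≤ D) :
    ∃ L, 0 ≤ L ∧ ∀ y, ∫ x, ‖g (x - y) - g x‖ ∂μ ≤ L * ‖y‖ := by
  set k := Module.finrank ℝ E + 1
  set M : E → ℝ := fun x => 2 ^ k * D / (1 + ‖x‖) ^ k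
  have hD0 : 0 ≤ D := (by positivity : (0 : ℝ) ≤ (1 + ‖(0 : E)‖) ^ k * ‖fderiv ℝ g 0‖).trans (hD 0)
  have hM : Integrable M μ := by
    refine ((integrable_one_add_norm (μ := μ) (r := k) (by simp [k])).const_mul (2 ^ k * D)).congr
      (.of_forall fun x => ?_)
    simp [M, Real.rpow_neg (by positivity : (0 : ℝ) ≤ 1 + ‖x‖), div_eq_mul_inv]
  have hgn : Integrable (fun x => ‖g x‖) μ := hgi.norm
  refine ⟨∫ x, M x ∂μ + 2 * ∫ x, ‖g x‖ ∂μ,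
    add_nonneg (integral_nonneg fun x => by positivity) (by positivity), fun y => ?_⟩
  have hMnn : 0 ≤ ∫ x, M x ∂μ := integral_nonneg fun x => by positivity
  have hgnn : 0 ≤ ∫ x, ‖g x‖ ∂μ := integral_nonneg fun x => norm_nonneg _
  rcases le_or_gt ‖y‖ 1 with hy | hy
  · calc ∫ x, ‖g (x - y) - g x‖ ∂μ ≤ ∫ x, M x * ‖y‖ ∂μ :=
          integral_mono_of_nonneg (.of_forall fun x => norm_nonneg _) (hM.mul_const _)
            (.of_forall fun x => norm_sub_comp_sub_le_of_fderiv_decay hg hD x hy)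
      _ = (∫ x, M x ∂μ) * ‖y‖ := integral_mul_const _ _
      _ ≤ _ := by gcongr; linarith
  · calc ∫ x, ‖g (x - y) - g x‖ ∂μ ≤ ∫ x, (‖g (x - y)‖ + ‖g x‖) ∂μ :=
          integral_mono_of_nonneg (.of_forall fun x => norm_nonneg _)
            ((hgn.comp_sub_right y).add hgn) (.of_forall fun x => norm_sub_le _ _)
      _ = 2 * ∫ x, ‖g x‖ ∂μ := by
          rw [integral_add (hgn.comp_sub_right y) hgn,
            integral_sub_right_eq_self (fun x => ‖g x‖) y]
          ring
      _ ≤ _ := by nlinarith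

lemma SchwartzMap.exists_integral_norm_sub_comp_sub_le (g : 𝓢(E, F)) :
    ∃ L, 0 ≤ L ∧ ∀ y, ∫ x, ‖g (x - y) - g x‖ ∂μ ≤ L * ‖y‖ := by
  set k := Module.finrank ℝ E + 1
  refine _root_.exists_integral_norm_sub_comp_sub_le g.differentiable g.integrable
    (D := 2 ^ k * ((Finset.Iic (k, 1)).sup fun m => SchwartzMap.seminorm ℝ m.1 m.2) g)
    fun z => ?_
  simpa [norm_iteratedFDeriv_one] using
    g.one_add_le_sup_seminorm_apply (𝕜 := ℝ) (m := (k, 1)) le_rfl le_rfl z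

end Translation

section Cancellation

variable {E 𝕜 : Type*} [RCLike 𝕜] [MeasurableSpace E]

lemma norm_integral_mul_comp_sub_le [Sub E] {μ : Measure E} {φ : E → 𝕜} (hφ : Integrable φ μ)
    (hφ0 : ∫ y, φ y ∂μ = 0) (g : E → 𝕜) (x : E) :
    ‖∫ y, φ y * g (x - y) ∂μ‖ ≤ ∫ y, ‖φ y‖ * ‖g (x - y) - g x‖ ∂μ := by
  have hrhs : 0 ≤ ∫ y, ‖φ y‖ * ‖g (x - y) - g x‖ ∂μ := integral_nonneg fun y => by positivity
  by_cases hint : Integrable (fun y => φ y * g (x - y)) μ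
  · have hcancel : ∫ y, φ y * g (x - y) ∂μ = ∫ y, φ y * (g (x - y) - g x) ∂μ := by
      simp_rw [mul_sub]
      rw [integral_sub hint (hφ.mul_const _), integral_mul_const, hφ0, zero_mul, sub_zero]
    rw [hcancel]
    simpa only [norm_mul] using norm_integral_le_integral_norm fun y => φ y * (g (x - y) - g x)
  · rwa [integral_undef hint, norm_zero]

variable [NormedAddCommGroup E] [BorelSpace E] [SecondCountableTopology E]
  {μ : Measure E} [SFinite μ] [μ.IsAddRightInvariant]

lemma integrable_norm_mul_norm_sub_comp_sub {φ g : E → 𝕜} (hφ : Continuous φ)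
    (hφi : Integrable φ μ) (hg : Continuous g) (hgi : Integrable g μ) :
    Integrable (fun p : E × E => ‖φ p.2‖ * ‖g (p.1 - p.2) - g p.1‖) (μ.prod μ) := by
  have htrans : Integrable (fun p : E × E => ‖φ p.2‖ * ‖g (p.1 - p.2)‖) (μ.prod μ) := by
    rw [integrable_prod_iff' (by fun_prop)]
    refine ⟨.of_forall fun y => (hgi.norm.comp_sub_right y).const_mul ‖φ y‖, ?_⟩
    refine (hφi.norm.mul_const (∫ x, ‖g x‖ ∂μ)).congr (.of_forall fun y => ?_)
    simp only [norm_mul, norm_norm]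
    rw [integral_const_mul, integral_sub_right_eq_self (fun x => ‖g x‖) y]
  refine (htrans.add (hgi.norm.mul_prod hφi.norm)).mono' (by fun_prop)
    (.of_forall fun p => ?_)
  rw [Real.norm_eq_abs, abs_of_nonneg (by positivity), Pi.add_apply, mul_comm ‖g p.1‖, ← mul_add]
  exact mul_le_mul_of_nonneg_left (norm_sub_le _ _) (norm_nonneg _)

lemma integral_norm_integral_mul_comp_sub_le {φ g : E → 𝕜} (hφ : Continuous φ)
    (hφi : Integrable φ μ) (hφ0 : ∫ y, φ y ∂μ = 0)
    (hφw : Integrable (fun y => ‖y‖ * ‖φ y‖) μ) (hg : Continuous g) (hgi : Integrable g μ)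
    {L : ℝ} (hL : ∀ y, ∫ x, ‖g (x - y) - g x‖ ∂μ ≤ L * ‖y‖) :
    ∫ x, ‖∫ y, φ y * g (x - y) ∂μ‖ ∂μ ≤ L * ∫ y, ‖y‖ * ‖φ y‖ ∂μ := by
  have hF := integrable_norm_mul_norm_sub_comp_sub hφ hφi hg hgi
  calc ∫ x, ‖∫ y, φ y * g (x - y) ∂μ‖ ∂μ
      ≤ ∫ x, ∫ y, ‖φ y‖ * ‖g (x - y) - g x‖ ∂μ ∂μ :=
        integral_mono_of_nonneg (.of_forall fun x => norm_nonneg _) hF.integral_prod_left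
          (.of_forall (norm_integral_mul_comp_sub_le hφi hφ0 g))
    _ = ∫ y, ‖φ y‖ * ∫ x, ‖g (x - y) - g x‖ ∂μ ∂μ := by
        rw [integral_integral_swap hF]
        simp_rw [integral_const_mul]
    _ ≤ ∫ y, L * (‖y‖ * ‖φ y‖) ∂μ :=
        integral_mono_of_nonneg
          (.of_forall fun y => mul_nonneg (norm_nonneg _) (integral_nonneg fun x => norm_nonneg _))
          (hφw.const_mul L) (.of_forall fun y => by
            simpa only [mul_left_comm, mul_comm ‖y‖] using
              mul_le_mul_of_nonneg_left (hL y) (norm_nonneg (φ y)))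
    _ = L * ∫ y, ‖y‖ * ‖φ y‖ ∂μ := integral_const_mul _ _

end Cancellation

section Dilation

variable {n : ℕ} (Q : Fin n → ℕ) {F : Type*} [NormedAddCommGroup F]

lemma continuous_dilate_uncurry :
    Continuous fun p : ℝ × (Fin n → ℝ) => dilate Q p.1 p.2 :=
  continuous_pi fun j => by unfold dilate; fun_prop

lemma continuous_dilate (l : ℝ) : Continuous (dilate Q l) :=
  continuous_dilate_uncurry Q |>.comp (Continuous.prodMk_right l)

lemma dilate_inv_dilate {l : ℝ} (hl : l ≠ 0) (y : Fin n → ℝ) :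
    dilate Q l⁻¹ (dilate Q l y) = y := by
  funext j
  simp only [dilate, ← mul_assoc, inv_pow, inv_mul_cancel₀ (pow_ne_zero _ hl), one_mul]

lemma measurableEmbedding_dilate {l : ℝ} (hl : l ≠ 0) : MeasurableEmbedding (dilate Q l) := by
  refine .of_measurable_inverse (continuous_dilate Q l).measurable ?_
    (continuous_dilate Q l⁻¹).measurable (dilate_inv_dilate Q hl)
  have hsurj : Function.Surjective (dilate Q l) := fun z =>
    ⟨dilate Q l⁻¹ z, by simpa using dilate_inv_dilate Q (inv_ne_zero hl) z⟩
  rw [hsurj.range_eq]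
  exact .univ

lemma map_dilate_volume {l : ℝ} (hl : 0 < l) :
    Measure.map (dilate Q l) volume = ENNReal.ofReal ((l ^ ∑ j, Q j)⁻¹) • volume := by
  have hdet : LinearMap.det (Matrix.toLin' (Matrix.diagonal fun j => l ^ Q j)) = l ^ ∑ j, Q j := by
    rw [LinearMap.det_toLin', Matrix.det_diagonal, Finset.prod_pow_eq_pow_sum]
  have hlin : dilate Q l = Matrix.toLin' (Matrix.diagonal fun j => l ^ Q j) := by
    funext v j
    simp [dilate, Matrix.mulVec_diagonal]
  rw [hlin, Measure.map_linearMap_addHaar_eq_smul_addHaar _ (by rw [hdet]; positivity), hdet,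
    abs_of_pos (by positivity)]

lemma integral_comp_dilate [NormedSpace ℝ F] {l : ℝ} (hl : 0 < l) (h : (Fin n → ℝ) → F) :
    ∫ y, h (dilate Q l y) = (l ^ ∑ j, Q j)⁻¹ • ∫ z, h z := by
  rw [← (measurableEmbedding_dilate Q hl.ne').integral_map, map_dilate_volume Q hl,
    integral_smul_measure, ENNReal.toReal_ofReal (by positivity)]

lemma integrable_comp_dilate_iff {l : ℝ} (hl : 0 < l) {h : (Fin n → ℝ) → F} :
    Integrable (fun y => h (dilate Q l y)) ↔ Integrable h := by
  rw [← Function.comp_def, ← (measurableEmbedding_dilate Q hl.ne').integrable_map_iff,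
    map_dilate_volume Q hl, integrable_smul_measure (by simp; positivity) ENNReal.ofReal_ne_top]

lemma norm_dilate_le (hQ : ∀ j, 1 ≤ Q j) {t : ℝ} (ht0 : 0 ≤ t) (ht1 : t ≤ 1)
    (z : Fin n → ℝ) : ‖dilate Q t z‖ ≤ t * ‖z‖ := by
  refine (pi_norm_le_iff_of_nonneg (by positivity)).mpr fun j => ?_
  rw [dilate, norm_mul, norm_pow, Real.norm_of_nonneg ht0]
  gcongr
  · simpa using pow_le_pow_of_le_one ht0 ht1 (hQ j)
  · exact norm_le_pi_norm z j

/-- The `L¹`-normalized dilation `σ_λ f`, with `l` for `λ`. -/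
def normalizedDilate (l : ℝ) (f : (Fin n → ℝ) → ℂ) (y : Fin n → ℝ) : ℂ :=
  (l : ℂ) ^ (∑ j, Q j) * f (dilate Q l y)

lemma continuous_normalizedDilate_uncurry {f : (Fin n → ℝ) → ℂ} (hf : Continuous f) :
    Continuous fun p : ℝ × (Fin n → ℝ) => normalizedDilate Q p.1 f p.2 :=
  (Complex.continuous_ofReal.comp continuous_fst).pow _ |>.mul
    (hf.comp (continuous_dilate_uncurry Q))

lemma continuous_normalizedDilate {f : (Fin n → ℝ) → ℂ} (hf : Continuous f) (l : ℝ) :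
    Continuous (normalizedDilate Q l f) :=
  (continuous_normalizedDilate_uncurry Q hf).comp (.prodMk_right l)

lemma integrable_normalizedDilate {l : ℝ} (hl : 0 < l) {f : (Fin n → ℝ) → ℂ}
    (hf : Integrable f) : Integrable (normalizedDilate Q l f) :=
  ((integrable_comp_dilate_iff Q hl).2 hf).const_mul _

lemma integral_normalizedDilate {l : ℝ} (hl : 0 < l) (f : (Fin n → ℝ) → ℂ) :
    ∫ y, normalizedDilate Q l f y = ∫ z, f z := by
  simp only [normalizedDilate]
  rw [integral_const_mul, integral_comp_dilate Q hl, Complex.real_smul, ← mul_assoc]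
  push_cast
  rw [mul_inv_cancel₀ (by exact_mod_cast (pow_pos hl _).ne'), one_mul]

lemma norm_mul_norm_normalizedDilate {l : ℝ} (hl : 0 < l) (f : (Fin n → ℝ) → ℂ)
    (y : Fin n → ℝ) : ‖y‖ * ‖normalizedDilate Q l f y‖ =
      l ^ (∑ j, Q j) * (‖dilate Q l⁻¹ (dilate Q l y)‖ * ‖f (dilate Q l y)‖) := by
  rw [dilate_inv_dilate Q hl.ne', normalizedDilate, norm_mul, norm_pow, Complex.norm_real,
    Real.norm_of_nonneg hl.le]
  ring

variable {Q}

lemma integrable_norm_mul_norm_normalizedDilate (hQ : ∀ j, 1 ≤ Q j) {l : ℝ} (hl : 1 ≤ l)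
    {f : (Fin n → ℝ) → ℂ} (hf : AEStronglyMeasurable f)
    (hfw : Integrable fun z => ‖z‖ * ‖f z‖) :
    Integrable fun y => ‖y‖ * ‖normalizedDilate Q l f y‖ := by
  have hl0 : 0 < l := one_pos.trans_le hl
  simp_rw [norm_mul_norm_normalizedDilate Q hl0]
  refine ((integrable_comp_dilate_iff Q hl0
    (h := fun z => ‖dilate Q l⁻¹ z‖ * ‖f z‖)).2 ?_).const_mul _
  refine (hfw.const_mul l⁻¹).mono'
    (((continuous_dilate Q l⁻¹).norm.aestronglyMeasurable).mul hf.norm)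
    (.of_forall fun z => ?_)
  rw [norm_mul, norm_norm, norm_norm, ← mul_assoc]
  gcongr
  exact norm_dilate_le Q hQ (by positivity) (inv_le_one_of_one_le₀ hl) z

lemma integral_norm_mul_norm_normalizedDilate_le (hQ : ∀ j, 1 ≤ Q j) {l : ℝ} (hl : 1 ≤ l)
    (f : (Fin n → ℝ) → ℂ) (hfw : Integrable fun z => ‖z‖ * ‖f z‖) :
    ∫ y, ‖y‖ * ‖normalizedDilate Q l f y‖ ≤ l⁻¹ * ∫ z, ‖z‖ * ‖f z‖ := by
  have hl0 : 0 < l := one_pos.trans_le hl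
  calc ∫ y, ‖y‖ * ‖normalizedDilate Q l f y‖
      = ∫ z, ‖dilate Q l⁻¹ z‖ * ‖f z‖ := by
        simp_rw [norm_mul_norm_normalizedDilate Q hl0]
        rw [integral_const_mul, integral_comp_dilate Q hl0 (fun z => ‖dilate Q l⁻¹ z‖ * ‖f z‖),
          smul_eq_mul, ← mul_assoc, mul_inv_cancel₀ (pow_pos hl0 _).ne', one_mul]
    _ ≤ ∫ z, l⁻¹ * (‖z‖ * ‖f z‖) :=
        integral_mono_of_nonneg (.of_forall fun z => by positivity) (hfw.const_mul _)
          (.of_forall fun z => by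
            dsimp only
            rw [← mul_assoc]
            gcongr
            exact norm_dilate_le Q hQ (by positivity) (inv_le_one_of_one_le₀ hl) z)
    _ = l⁻¹ * ∫ z, ‖z‖ * ‖f z‖ := integral_const_mul _ _

lemma stronglyMeasurable_integral_norm_integral_normalizedDilate_mul
    {f g : (Fin n → ℝ) → ℂ} (hf : Continuous f) (hg : Continuous g) :
    StronglyMeasurable fun l => ∫ x, ‖∫ y, normalizedDilate Q l f y * g (x - y)‖ := by
  have hkernel : Continuous fun p : (ℝ × (Fin n → ℝ)) × (Fin n → ℝ) =>
      normalizedDilate Q p.1.1 f p.2 * g (p.1.2 - p.2) :=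
    ((continuous_normalizedDilate_uncurry Q hf).comp
      (continuous_fst.fst.prodMk continuous_snd)).mul
      (hg.comp (continuous_fst.snd.sub continuous_snd))
  exact hkernel.stronglyMeasurable.integral_prod_right'.norm.integral_prod_right'

end Dilation

lemma integrableOn_Ici_div_of_norm_le {F : ℝ → ℝ} (hF : AEStronglyMeasurable F) {C : ℝ}
    (hC : ∀ l, 1 ≤ l → ‖F l‖ ≤ C / l) : IntegrableOn (fun l => F l / l) (Set.Ici 1) := by
  have hdom : IntegrableOn (fun l : ℝ => C * l ^ (-2 : ℝ)) (Set.Ici 1) := by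
    rw [integrableOn_Ici_iff_integrableOn_Ioi]
    exact (integrableOn_Ioi_rpow_of_lt (by norm_num) one_pos).const_mul _
  refine hdom.mono' (hF.div₀ aestronglyMeasurable_id).restrict ?_
  refine (ae_restrict_iff' measurableSet_Ici).2 (.of_forall fun l (hl : 1 ≤ l) => ?_)
  have hl0 : 0 < l := one_pos.trans_le hl
  rw [norm_div, Real.norm_of_nonneg hl0.le, Real.rpow_neg hl0.le, Real.rpow_two,
    div_le_iff₀ hl0]
  calc ‖F l‖ ≤ C / l := hC l hl
    _ = C * (l ^ 2)⁻¹ * l := by field_simp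

/-- **Decay of convolutions with dilated mean-zero Schwartz functions.**
Let `f` be a Schwartz function on `ℝⁿ` with `∫ f = 0`, and let
`σ_λ f (v) = λ^d f(λ·v)` be its L¹-normalized anisotropic dilation, where
`d = ∑ q_j` is the homogeneous dimension.  Then for every Schwartz function `g` there is
a constant `C` with `‖σ_λ f ⋆ g‖_{L¹} ≤ C λ⁻¹` for all `λ ≥ 1`; consequently
`∫_1^∞ ‖σ_λ f ⋆ g‖_{L¹} dλ/λ < ∞`. -/
theorem stmt_16 {n : ℕ} (Q : Fin n → ℕ) (hQ : ∀ j, 1 ≤ Q j)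
    (f g : SchwartzMap (Fin n → ℝ) ℂ) (hf : ∫ v, f v = 0) :
    ∃ C : ℝ,
      (∀ l : ℝ, 1 ≤ l →
        (∫ x, ‖∫ y, (l : ℂ) ^ (∑ j, Q j) * f (dilate Q l y) * g (x - y)‖) ≤ C / l) ∧
      IntegrableOn
        (fun l : ℝ =>
          (∫ x, ‖∫ y, (l : ℂ) ^ (∑ j, Q j) * f (dilate Q l y) * g (x - y)‖) / l)
        (Set.Ici 1) := by
  obtain ⟨L, hL0, hL⟩ := g.exists_integral_norm_sub_comp_sub_le (μ := volume)
  have hfw : Integrable fun z => ‖z‖ * ‖f z‖ := by simpa using f.integrable_pow_mul volume 1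
  have hbound : ∀ l : ℝ, 1 ≤ l → ∫ x, ‖∫ y, normalizedDilate Q l f y * g (x - y)‖ ≤
      L * (∫ z, ‖z‖ * ‖f z‖) / l := by
    intro l hl
    have hl0 : 0 < l := one_pos.trans_le hl
    calc ∫ x, ‖∫ y, normalizedDilate Q l f y * g (x - y)‖
        ≤ L * ∫ y, ‖y‖ * ‖normalizedDilate Q l f y‖ :=
          integral_norm_integral_mul_comp_sub_le
            (continuous_normalizedDilate Q f.continuous l)
            (integrable_normalizedDilate Q hl0 f.integrable)
            (by rw [integral_normalizedDilate Q hl0, hf])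
            (integrable_norm_mul_norm_normalizedDilate hQ hl f.continuous.aestronglyMeasurable hfw)
            g.continuous g.integrable hL
      _ ≤ L * (l⁻¹ * ∫ z, ‖z‖ * ‖f z‖) := by
          gcongr
          exact integral_norm_mul_norm_normalizedDilate_le hQ hl f hfw
      _ = L * (∫ z, ‖z‖ * ‖f z‖) / l := by ring
  refine ⟨L * ∫ z, ‖z‖ * ‖f z‖, hbound, integrableOn_Ici_div_of_norm_le
    (stronglyMeasurable_integral_norm_integral_normalizedDilate_mul f.continuous
      g.continuous).aestronglyMeasurable fun l hl =>
    (Real.norm_of_nonneg (integral_nonneg fun _ => norm_nonneg _)).trans_le (hbound l hl)⟩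
end
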